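/- Let R be a commutative unital ring, α : ℤ → R a family of elements, and S_s^k(n) the associated Svinin polynomials. Then for every integer k ≥ 1 and every n ∈ ℤ, S_k^k(n) + S_k^k(n−1) = S_{k+1}^k(n). -/

import Mathlib

/-- Svinin polynomials: `svinin α s k n` is `S_s^k(n)`, defined by
`S_s^0(n) = 1` and `S_s^k(n) = Σ_{j=0}^{s−1} α_{n−k−j+1} · S_{s−j}^{k−1}(n−j)` for `k ≥ 1`. -/
def svinin {R : Type*} [Ring R] (α : ℤ → R) : ℕ → ℕ → ℤ → R
  | _, 0, _ => 1
  | s, k + 1, n =>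
      ∑ j ∈ Finset.range s,
        α (n - ((k : ℤ) + 1) - (j : ℤ) + 1) * svinin α (s - j) k (n - (j : ℤ))

/-!
Unfolding the recursion, `S_s^k(n)` is the sum over `0 ≤ J₁ ≤ ⋯ ≤ J_k ≤ s - 1` of
`α(n-k+1-J₁) ⋯ α(n-J_k)`. Splitting off the cases `J₁ = 0` and `J_k = s - 1` gives two
three-term recursions, and by a double induction they factor the "deep" polynomials as
`S_{u+1}^{u+e}(n) = S_1^e(n-u) · S_{u+e+1}^u(n)`, where `S_1^e(n-u)` is a product of `e`
consecutive `α`'s. For `u + 1 = k`, `e = 1` this turns `S_k^k(n)` into the first term of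
the `J₁ = 0` recursion for `S_{k+1}^k(n)`, whose second term is `S_k^k(n-1)`.
-/

section Ring

variable {R : Type*} [Ring R] (α : ℤ → R)

theorem svinin_succ (s k : ℕ) (n : ℤ) :
    svinin α s (k + 1) n =
      ∑ j ∈ Finset.range s, α (n - k - j) * svinin α (s - j) k (n - j) := by
  rw [svinin]
  refine Finset.sum_congr rfl fun j _ => ?_
  congr 2
  ring

theorem svinin_zero_succ (k : ℕ) (n : ℤ) : svinin α 0 (k + 1) n = 0 := by
  simp [svinin_succ]

theorem svinin_succ_succ_eq_mul_add (s k : ℕ) (n : ℤ) :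
    svinin α (s + 1) (k + 1) n = α (n - k) * svinin α (s + 1) k n + svinin α s (k + 1) (n - 1) := by
  rw [svinin_succ, Finset.sum_range_succ', svinin_succ, add_comm]
  congr 1
  · simp
  · refine Finset.sum_congr rfl fun j _ => ?_
    rw [Nat.add_sub_add_right]
    push_cast
    ring_nf

theorem svinin_succ_succ_eq_add_mul (s k : ℕ) (n : ℤ) :
    svinin α (s + 1) (k + 1) n = svinin α s (k + 1) n + svinin α (s + 1) k (n - 1) * α (n - s) := by
  induction k generalizing s n with
  | zero =>
    simp only [svinin, Finset.sum_range_succ, mul_one, one_mul]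
    ring_nf
  | succ k ih =>
    calc svinin α (s + 1) (k + 2) n
        = ∑ j ∈ Finset.range (s + 1), α (n - 1 - k - j) *
            (svinin α (s - j) (k + 1) (n - j) + svinin α (s + 1 - j) k (n - 1 - j) * α (n - s)) := by
          rw [svinin_succ]
          refine Finset.sum_congr rfl fun j hj => ?_
          have hjs : j ≤ s := Nat.lt_succ_iff.mp (Finset.mem_range.mp hj)
          rw [Nat.sub_add_comm hjs, ih, Nat.cast_sub hjs]
          congr 2 <;> push_cast <;> ring_nf
      _ = ∑ j ∈ Finset.range (s + 1), α (n - 1 - k - j) * svinin α (s - j) (k + 1) (n - j)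
            + svinin α (s + 1) (k + 1) (n - 1) * α (n - s) := by
          simp only [mul_add, Finset.sum_add_distrib, svinin_succ α (s + 1) k, Finset.sum_mul,
            mul_assoc]
      _ = svinin α s (k + 2) n + svinin α (s + 1) (k + 1) (n - 1) * α (n - s) := by
          rw [Finset.sum_range_succ, Nat.sub_self, svinin_zero_succ, mul_zero, add_zero,
            svinin_succ α s (k + 1)]
          push_cast
          ring_nf

theorem svinin_one_succ (k : ℕ) (n : ℤ) :
    svinin α 1 (k + 1) n = α (n - k) * svinin α 1 k n := by
  simpa [svinin_zero_succ] using svinin_succ_succ_eq_mul_add α 0 k n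

end Ring

theorem svinin_succ_add_eq_mul {R : Type*} [CommRing R] (α : ℤ → R) (u e : ℕ) (n : ℤ) :
    svinin α (u + 1) (u + e) n = svinin α 1 e (n - u) * svinin α (u + e + 1) u n := by
  induction u generalizing e n with
  | zero => simp [svinin]
  | succ v ih =>
    induction e generalizing n with
    | zero => exact (one_mul _).symm
    | succ e ihe =>
      have first := svinin_succ_succ_eq_mul_add α (v + 1) (v + e + 1) n
      have last := svinin_succ_succ_eq_add_mul α (v + e + 2) v n
      have shallow := ihe n
      have deep := ih (e + 2) (n - 1)
      have product := svinin_one_succ α e (n - v - 1)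
      have product' := svinin_one_succ α (e + 1) (n - v - 1)
      linear_combination (norm := (push_cast; ring_nf))
        first + α (n - v - e - 1) * shallow + deep - svinin α 1 (e + 1) (n - v - 1) * last
          - svinin α (v + e + 2) (v + 1) n * product + svinin α (v + e + 3) v (n - 1) * product'

/-- In a commutative ring, for `k ≥ 1`: `S_k^k(n) + S_k^k(n−1) = S_{k+1}^k(n)`. -/
theorem svinin_sum_identity {R : Type*} [CommRing R] (α : ℤ → R)
    (k : ℕ) (hk : 1 ≤ k) (n : ℤ) :
    svinin α k k n + svinin α k k (n - 1) = svinin α (k + 1) k n := by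
  obtain ⟨m, rfl⟩ : ∃ m, k = m + 1 := ⟨k - 1, by omega⟩
  rw [svinin_succ_succ_eq_mul_add α (m + 1) m n, svinin_succ_add_eq_mul α m 1 n,
    svinin_one_succ]
  simp [svinin]
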